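/- arXiv:1112.5569 — 2 statements merged into one kernel-verified Lean document; each statement's English description precedes it below -/
import Mathlib

section
/- Let A be a W*-algebra, m : A^pr → [0,∞) a measure on projections of A, H a complex Hilbert space, and μ : A^pr → H a finitely additive orthogonal vector measure on X = A^pr such that ‖μ(p)‖² = m(p) for every p ∈ A^pr. Then μ is an orthogonal vector measure: for every family (p_j)_{j∈J} of pairwise orthogonal projections with sum p, the vectors μ(p_j) are pairwise orthogonal and μ(p) = Σ_{j∈J} μ(p_j), the series converging in norm along the net of finite partial sums. -/
set_option synthInstance.maxHeartbeats 1000000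
set_option maxHeartbeats 1000000

open Filter

/-!
Statement 6: If `m` is a measure on projections of a W*-algebra `A` (realized as a
von Neumann algebra on a Hilbert space), `μ : A^pr → K` is a finitely additive
orthogonal vector measure on `A^pr` with `‖μ(p)‖² = m(p)` for all projections `p`,
then `μ` is an orthogonal vector measure.
-/

universe u

variable {H : Type u} [NormedAddCommGroup H] [InnerProductSpace ℂ H] [CompleteSpace H]

/-- `p` is an orthogonal projection belonging to the von Neumann algebra `A`. -/
def VonNeumannAlgebra.IsProjectionIn (A : VonNeumannAlgebra H) (p : H →L[ℂ] H) : Prop :=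
  p ∈ A ∧ p * p = p ∧ star p = p

/-- The net of finite partial sums of the family `p` converges to `q` in the weak
operator topology. -/
def HasWOTSum {I : Type u} (p : I → (H →L[ℂ] H)) (q : H →L[ℂ] H) : Prop :=
  Tendsto (fun s : Finset I => (ContinuousLinearMapWOT.ofCLM (∑ i ∈ s, p i) : H →WOT[ℂ] H)) atTop
    (nhds (ContinuousLinearMapWOT.ofCLM q : H →WOT[ℂ] H))

/-- `m` is a (completely additive) measure on the projections of `A`. -/
def IsMeasureOnProjections (A : VonNeumannAlgebra H) (m : (H →L[ℂ] H) → ℝ) : Prop :=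
  (∀ p, A.IsProjectionIn p → 0 ≤ m p) ∧
  ∀ {I : Type u} (p : I → (H →L[ℂ] H)) (q : H →L[ℂ] H),
    (∀ i, A.IsProjectionIn (p i)) → A.IsProjectionIn q →
    (∀ i j, i ≠ j → p i * p j = 0) → HasWOTSum p q →
    HasSum (fun i => m (p i)) (m q)

/-- `μ` is an orthogonal vector measure on the projections of `A` with values in the
Hilbert space `K`. -/
def IsOrthogonalVectorMeasure (A : VonNeumannAlgebra H)
    {K : Type*} [NormedAddCommGroup K] [InnerProductSpace ℂ K]
    (μ : (H →L[ℂ] H) → K) : Prop :=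
  ∀ {I : Type u} (p : I → (H →L[ℂ] H)) (q : H →L[ℂ] H),
    (∀ i, A.IsProjectionIn (p i)) → A.IsProjectionIn q →
    (∀ i j, i ≠ j → p i * p j = 0) → HasWOTSum p q →
    (∀ i j, i ≠ j → (inner ℂ (μ (p i)) (μ (p j)) : ℂ) = 0) ∧
      HasSum (fun i => μ (p i)) (μ q)

/-- `μ` is a finitely additive orthogonal vector measure on a set `X` of projections. -/
def IsFinitelyAdditiveOVMOn {K : Type*} [NormedAddCommGroup K] [InnerProductSpace ℂ K]
    (X : Set (H →L[ℂ] H)) (μ : (H →L[ℂ] H) → K) : Prop :=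
  ∀ p ∈ X, ∀ q ∈ X, p * q = 0 →
    (inner ℂ (μ p) (μ q) : ℂ) = 0 ∧ μ (p + q) = μ p + μ q

lemma pyth_sq {K : Type*} [NormedAddCommGroup K] [InnerProductSpace ℂ K]
    (x y : K) (h : (inner ℂ x y : ℂ) = 0) : ‖x + y‖ ^ 2 = ‖x‖ ^ 2 + ‖y‖ ^ 2 := by
  rw [pow_two, pow_two, pow_two]
  exact norm_add_sq_eq_norm_sq_add_norm_sq_of_inner_eq_zero x y h

theorem finitely_additive_ovm_is_ovm
    (A : VonNeumannAlgebra H) (m : (H →L[ℂ] H) → ℝ)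
    (hm : IsMeasureOnProjections A m)
    {K : Type*} [NormedAddCommGroup K] [InnerProductSpace ℂ K] [CompleteSpace K]
    (μ : (H →L[ℂ] H) → K)
    (hμ : IsFinitelyAdditiveOVMOn {p | A.IsProjectionIn p} μ)
    (hnorm : ∀ p, A.IsProjectionIn p → ‖μ p‖ ^ 2 = m p) :
    IsOrthogonalVectorMeasure A μ := by
  classical
  intro I p q hp hq horth hsum
  have hproj0 : A.IsProjectionIn 0 := ⟨zero_mem _, by simp, by simp⟩
  have hμ0 : μ 0 = 0 := by
    have h := (hμ 0 hproj0 0 hproj0 (by simp)).2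
    rw [add_zero] at h
    exact (left_eq_add.mp h)
  have hm0 : m 0 = 0 := by
    have h := hnorm 0 hproj0
    rw [hμ0] at h
    simpa using h.symm
  -- finite partial sums are projections in A
  have hsum_orth : ∀ (s : Finset I) (i : I), i ∉ s → p i * ∑ j ∈ s, p j = 0 := by
    intro s i his
    rw [Finset.mul_sum]
    exact Finset.sum_eq_zero fun j hj => horth i j (fun h => his (h ▸ hj))
  have hPs : ∀ s : Finset I, A.IsProjectionIn (∑ i ∈ s, p i) := by
    intro s
    refine ⟨sum_mem (fun i _ => (hp i).1), ?_, ?_⟩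
    · rw [Finset.sum_mul]
      refine Finset.sum_congr rfl fun i hi => ?_
      rw [Finset.mul_sum,
        Finset.sum_eq_single i (fun j _ hji => horth i j (Ne.symm hji)) (fun h => absurd hi h),
        (hp i).2.1]
    · rw [star_sum]
      exact Finset.sum_congr rfl fun i _ => (hp i).2.2
  -- μ of finite sums
  have hμsum : ∀ s : Finset I, μ (∑ i ∈ s, p i) = ∑ i ∈ s, μ (p i) := by
    intro s
    induction s using Finset.induction with
    | empty => simpa using hμ0
    | @insert a s ha ih =>
      rw [Finset.sum_insert ha, Finset.sum_insert ha, ← ih]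
      exact (hμ (p a) (hp a) _ (hPs s) (hsum_orth s a ha)).2
  -- m of finite sums
  have hmsum : ∀ s : Finset I, m (∑ i ∈ s, p i) = ∑ i ∈ s, m (p i) := by
    intro s
    induction s using Finset.induction with
    | empty => simpa using hm0
    | @insert a s ha ih =>
      have h2 := hμ (p a) (hp a) _ (hPs s) (hsum_orth s a ha)
      have hproj : A.IsProjectionIn (p a + ∑ i ∈ s, p i) := by
        rw [← Finset.sum_insert ha]; exact hPs _
      rw [Finset.sum_insert ha, Finset.sum_insert ha, ← hnorm _ hproj, h2.2,
        pyth_sq _ _ h2.1,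
        hnorm _ (hp a), hnorm _ (hPs s), ih]
  -- each p i is dominated by q
  have hpq : ∀ i, p i * q = p i := by
    intro i
    ext x
    rw [NormedSpace.eq_iff_forall_dual_eq (𝕜 := ℂ)]
    intro g
    have ht := ContinuousLinearMapWOT.tendsto_iff_forall_dual_apply_tendsto
      (f := fun s : Finset I => (ContinuousLinearMapWOT.ofCLM (∑ j ∈ s, p j) : H →WOT[ℂ] H)).mp hsum x
      (g.comp (p i))
    have heq : (fun s : Finset I =>
        (g.comp (p i)) (((ContinuousLinearMapWOT.ofCLM (∑ j ∈ s, p j) : H →WOT[ℂ] H)) x))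
        =ᶠ[atTop] fun _ => g ((p i) x) := by
      filter_upwards [Filter.eventually_ge_atTop {i}] with s hs
      have hmem : i ∈ s := Finset.singleton_subset_iff.mp hs
      have hPi : p i * ∑ j ∈ s, p j = p i := by
        rw [Finset.mul_sum,
          Finset.sum_eq_single i (fun j _ hji => horth i j (Ne.symm hji))
            (fun h => absurd hmem h), (hp i).2.1]
      calc (g.comp (p i)) (((ContinuousLinearMapWOT.ofCLM (∑ j ∈ s, p j) : H →WOT[ℂ] H)) x)
          = g ((p i * ∑ j ∈ s, p j) x) := rfl
        _ = g ((p i) x) := by rw [hPi]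
    have h1 : Tendsto (fun _ : Finset I => g ((p i) x)) atTop
        (nhds ((g.comp (p i)) (((ContinuousLinearMapWOT.ofCLM q : H →WOT[ℂ] H)) x))) := ht.congr' heq
    have h2 := tendsto_nhds_unique h1 tendsto_const_nhds
    have h3 : (g.comp (p i)) (((ContinuousLinearMapWOT.ofCLM q : H →WOT[ℂ] H)) x) = g ((p i * q) x) := rfl
    rw [← h3]
    exact h2
  have hqp : ∀ i, q * p i = p i := by
    intro i
    have h := congrArg star (hpq i)
    rwa [star_mul, (hp i).2.2, hq.2.2] at h
  refine ⟨fun i j hij => (hμ _ (hp i) _ (hp j) (horth i j hij)).1, ?_⟩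
  have hmq := hm.2 p q hp hq horth hsum
  -- the key estimate
  have key : ∀ s : Finset I, ‖μ q - ∑ i ∈ s, μ (p i)‖ ^ 2 = m q - ∑ i ∈ s, m (p i) := by
    intro s
    set P := ∑ i ∈ s, p i with hP
    have hPsq : P * q = P := by
      rw [hP, Finset.sum_mul]
      exact Finset.sum_congr rfl fun i _ => hpq i
    have hqPs : q * P = P := by
      rw [hP, Finset.mul_sum]
      exact Finset.sum_congr rfl fun i _ => hqp i
    have hrproj : A.IsProjectionIn (q - P) := by
      refine ⟨sub_mem hq.1 (hPs s).1, ?_, ?_⟩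
      · rw [mul_sub, sub_mul, sub_mul, hq.2.1, (hPs s).2.1, hPsq, hqPs]; abel
      · rw [star_sub, hq.2.2, (hPs s).2.2]
    have hPr : P * (q - P) = 0 := by rw [mul_sub, hPsq, (hPs s).2.1, sub_self]
    have h2 := hμ P (hPs s) (q - P) hrproj hPr
    have hq2 : μ q = μ P + μ (q - P) := by
      have h3 := h2.2
      have h4 : P + (q - P) = q := by abel
      rwa [h4] at h3
    have hdiff : μ q - ∑ i ∈ s, μ (p i) = μ (q - P) := by
      rw [← hμsum s, ← hP, hq2]; abel
    have hpyth : m q = m P + m (q - P) := by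
      rw [← hnorm q hq, hq2,
        pyth_sq _ _ h2.1,
        hnorm _ (hPs s), hnorm _ hrproj]
    rw [hdiff, hnorm _ hrproj, ← hmsum s, ← hP, hpyth]
    ring
  have h0 : Tendsto (fun s : Finset I => m q - ∑ i ∈ s, m (p i)) atTop (nhds 0) := by
    simpa using Filter.Tendsto.sub (tendsto_const_nhds (x := m q)) hmq
  have hsqrt : Tendsto (fun s : Finset I => Real.sqrt (m q - ∑ i ∈ s, m (p i))) atTop
      (nhds 0) := by
    have h := (Real.continuous_sqrt.tendsto 0).comp h0
    simpa [Function.comp_def] using h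
  have hnorm0 : Tendsto (fun s : Finset I => ‖μ q - ∑ i ∈ s, μ (p i)‖) atTop (nhds 0) :=
    hsqrt.congr fun s => by rw [← key s, Real.sqrt_sq (norm_nonneg _)]
  rw [HasSum, tendsto_iff_norm_sub_tendsto_zero]
  exact hnorm0.congr fun s => by rw [norm_sub_rev]
end

section
/- Let (Ω,ν) be a σ-finite measure space, M = L^∞(Ω,ν), N = M₂(M), and m a measure on projections of N. Fix x ∈ M with 0 ≤ x ≤ 1 and rp(x(1−x)) = 1, and a unitary v ∈ M. Suppose h₀, k₀, h, k ∈ L²(Ω,ν) are nonnegative and satisfy, for all projections π₁, π₂, π ∈ M: m(π₁⊕π₂) = ∫_{π₁} h₀² dν + ∫_{π₂} k₀² dν, m(p(xπ,v,π)) = ∫_{π} h² dν, and m(p((1−x)π,−v,π)) = ∫_{π} k² dν. Then h²(ω) + k²(ω) = h₀²(ω) + k₀²(ω) for ν-almost every ω. -/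
set_option synthInstance.maxHeartbeats 1000000
set_option maxHeartbeats 1000000

open MeasureTheory Filter

/-!
Statement 12: For a measure `m` on projections of `N = M₂(L^∞(Ω,ν))`, a fixed
`0 ≤ x ≤ 1` with `rp(x(1−x)) = 1` and a unitary `v`, if the nonnegative functions
`h₀, k₀, h, k ∈ L²(Ω,ν)` represent `m` on the diagonal projections `π₁⊕π₂`, on the
projections `p(xπ,v,π)` and on `p((1−x)π,−v,π)` respectively, then
`h² + k² = h₀² + k₀²` holds `ν`-a.e.

`L^∞(Ω,ν)` is modelled by `Ω →ₘ[ν] ℂ` (projections of `M₂(L^∞)` automatically have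
essentially bounded entries), with the canonical ring and star-ring structures;
projections of `M = L^∞` are the classes of characteristic functions `ind s`.
-/

universe u

variable {Ω : Type u} [MeasurableSpace Ω] {ν : MeasureTheory.Measure Ω}

noncomputable instance AEEqFun.instCommRing : CommRing (Ω →ₘ[ν] ℂ) where
  __ := (inferInstance : AddCommGroup (Ω →ₘ[ν] ℂ))
  __ := (inferInstance : CommMonoid (Ω →ₘ[ν] ℂ))
  left_distrib a b c := MeasureTheory.AEEqFun.toGerm_injective <| by
    simp [AEEqFun.mul_toGerm, AEEqFun.add_toGerm, mul_add]
  right_distrib a b c := MeasureTheory.AEEqFun.toGerm_injective <| by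
    simp [AEEqFun.mul_toGerm, AEEqFun.add_toGerm, add_mul]
  zero_mul a := MeasureTheory.AEEqFun.toGerm_injective <| by
    simp [AEEqFun.mul_toGerm, AEEqFun.zero_toGerm]
  mul_zero a := MeasureTheory.AEEqFun.toGerm_injective <| by
    simp [AEEqFun.mul_toGerm, AEEqFun.zero_toGerm]

noncomputable instance AEEqFun.instStarRing : StarRing (Ω →ₘ[ν] ℂ) where
  star f := f.comp (starRingEnd ℂ) (by continuity)
  star_involutive f := AEEqFun.ext <| by
    filter_upwards [AEEqFun.coeFn_comp (starRingEnd ℂ) (by continuity)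
      (f.comp (starRingEnd ℂ) (by continuity)),
      AEEqFun.coeFn_comp (starRingEnd ℂ) (by continuity) f] with ω h1 h2
    simp_all
  star_mul f g := AEEqFun.ext <| by
    filter_upwards [AEEqFun.coeFn_comp (starRingEnd ℂ) (by continuity) (f * g),
      AEEqFun.coeFn_mul f g,
      AEEqFun.coeFn_mul (g.comp (starRingEnd ℂ) (by continuity))
        (f.comp (starRingEnd ℂ) (by continuity)),
      AEEqFun.coeFn_comp (starRingEnd ℂ) (by continuity) f,
      AEEqFun.coeFn_comp (starRingEnd ℂ) (by continuity) g] with ω h1 h2 h3 h4 h5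
    simp_all [mul_comm]
  star_add f g := AEEqFun.ext <| by
    filter_upwards [AEEqFun.coeFn_comp (starRingEnd ℂ) (by continuity) (f + g),
      AEEqFun.coeFn_add f g,
      AEEqFun.coeFn_add (f.comp (starRingEnd ℂ) (by continuity))
        (g.comp (starRingEnd ℂ) (by continuity)),
      AEEqFun.coeFn_comp (starRingEnd ℂ) (by continuity) f,
      AEEqFun.coeFn_comp (starRingEnd ℂ) (by continuity) g] with ω h1 h2 h3 h4 h5
    simp_all

/-- The characteristic function of a measurable set `s`, as a projection of
`M = L^∞(Ω,ν)`. -/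
noncomputable def ind (ν : MeasureTheory.Measure Ω) {s : Set Ω} (hs : MeasurableSet s) :
    Ω →ₘ[ν] ℂ :=
  AEEqFun.mk (s.indicator fun _ => (1 : ℂ))
    ((measurable_const.indicator hs).aestronglyMeasurable)

/-- The positive square root of a positive element of `M = L^∞(Ω,ν)` (computed
pointwise). -/
noncomputable def aeSqrt (a : Ω →ₘ[ν] ℂ) : Ω →ₘ[ν] ℂ :=
  a.comp (fun z => (Real.sqrt z.re : ℂ)) (by continuity)

/-- The matrix `p(y,v,π)` with entries `p₁₁ = y`, `p₁₂ = v·(y(π−y))^{1/2}`,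
`p₂₁ = v*·(y(π−y))^{1/2}`, `p₂₂ = π−y`. -/
noncomputable def pm (y v π : Ω →ₘ[ν] ℂ) : Matrix (Fin 2) (Fin 2) (Ω →ₘ[ν] ℂ) :=
  !![y, v * aeSqrt (y * (π - y));
     star v * aeSqrt (y * (π - y)), π - y]

/-- The diagonal matrix `π₁ ⊕ π₂ = diag(π₁,π₂)`. -/
noncomputable def diagN (π₁ π₂ : Ω →ₘ[ν] ℂ) : Matrix (Fin 2) (Fin 2) (Ω →ₘ[ν] ℂ) :=
  !![π₁, 0; 0, π₂]

/-- `q` is a projection of `M = L^∞(Ω,ν)`. -/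
def IsProjectionM (q : Ω →ₘ[ν] ℂ) : Prop := q * q = q ∧ star q = q

/-- `q` is the range projection of `a` in `M`: the least projection `q` of `M` with
`q·a = a` (for projections, `q ≤ q'` iff `q·q' = q`). -/
def IsRangeProjectionM (q a : Ω →ₘ[ν] ℂ) : Prop :=
  IsProjectionM q ∧ q * a = a ∧
    ∀ q', IsProjectionM q' → q' * a = a → q * q' = q

/-- `p` is an orthogonal projection of `N = M₂(L^∞(Ω,ν))`. -/
def IsProjectionN (p : Matrix (Fin 2) (Fin 2) (Ω →ₘ[ν] ℂ)) : Prop :=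
  p * p = p ∧ star p = p

/-- Convergence of the net of finite partial sums to `q` in the (entrywise) weak*
topology of `N = M₂(L^∞(Ω,ν))`, tested against `L¹(ν)`. -/
def HasWeakStarSum {I : Type u} (ν : MeasureTheory.Measure Ω)
    (p : I → Matrix (Fin 2) (Fin 2) (Ω →ₘ[ν] ℂ))
    (q : Matrix (Fin 2) (Fin 2) (Ω →ₘ[ν] ℂ)) : Prop :=
  ∀ (a b : Fin 2) (g : Lp ℂ 1 ν),
    Tendsto (fun s : Finset I => ∫ ω, ((∑ i ∈ s, p i) a b) ω * g ω ∂ν) atTop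
      (nhds (∫ ω, (q a b) ω * g ω ∂ν))

/-- `m` is a (completely additive) measure on the projections of `N`. -/
def IsMeasureOnProjectionsN (ν : MeasureTheory.Measure Ω)
    (m : Matrix (Fin 2) (Fin 2) (Ω →ₘ[ν] ℂ) → ℝ) : Prop :=
  (∀ p, IsProjectionN p → 0 ≤ m p) ∧
  ∀ {I : Type u} (p : I → Matrix (Fin 2) (Fin 2) (Ω →ₘ[ν] ℂ))
    (q : Matrix (Fin 2) (Fin 2) (Ω →ₘ[ν] ℂ)),
    (∀ i, IsProjectionN (p i)) → IsProjectionN q →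
    (∀ i j, i ≠ j → p i * p j = 0) → HasWeakStarSum ν p q →
    HasSum (fun i => m (p i)) (m q)

open scoped ComplexConjugate

lemma coeFn_star (f : Ω →ₘ[ν] ℂ) :
    ⇑(star f) =ᶠ[MeasureTheory.ae ν] fun ω => conj (f ω) :=
  AEEqFun.coeFn_comp (starRingEnd ℂ) (by continuity) f

lemma coeFn_aeSqrt (f : Ω →ₘ[ν] ℂ) :
    ⇑(aeSqrt f) =ᶠ[MeasureTheory.ae ν] fun ω => (Real.sqrt (f ω).re : ℂ) :=
  AEEqFun.coeFn_comp _ (by continuity) f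

/-- pointwise model of the matrix `pm`. -/
noncomputable def pmC (y u p : ℂ) : Matrix (Fin 2) (Fin 2) ℂ :=
  !![y, u * (Real.sqrt (y * (p - y)).re : ℂ);
     conj u * (Real.sqrt (y * (p - y)).re : ℂ), p - y]

lemma coeFn_pm (y u π : Ω →ₘ[ν] ℂ) (a b : Fin 2) :
    ⇑(pm y u π a b) =ᶠ[MeasureTheory.ae ν] fun ω => pmC (y ω) (u ω) (π ω) a b := by
  have hsq : ⇑(aeSqrt (y * (π - y))) =ᶠ[MeasureTheory.ae ν]
      fun ω => (Real.sqrt (y ω * (π ω - y ω)).re : ℂ) := by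
    filter_upwards [coeFn_aeSqrt (y * (π - y)), AEEqFun.coeFn_mul y (π - y),
      AEEqFun.coeFn_sub π y] with ω e1 e2 e3
    rw [e1, e2]; simp [e3]
  fin_cases a <;> fin_cases b
  · simp only [pm, pmC, Fin.mk_zero, Fin.mk_one, Fin.isValue, Matrix.of_apply, Matrix.cons_val', Matrix.cons_val_zero, Matrix.empty_val',
      Matrix.cons_val_fin_one]
    exact Filter.EventuallyEq.rfl
  · simp only [pm, pmC, Fin.mk_zero, Fin.mk_one, Fin.isValue, Matrix.of_apply, Matrix.cons_val', Matrix.cons_val_zero, Matrix.cons_val_one,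
      Matrix.head_cons, Matrix.empty_val', Matrix.cons_val_fin_one]
    filter_upwards [AEEqFun.coeFn_mul u (aeSqrt (y * (π - y))), hsq] with ω e1 e2
    rw [e1]; simp [e2]
  · simp only [pm, pmC, Fin.mk_zero, Fin.mk_one, Fin.isValue, Matrix.of_apply, Matrix.cons_val', Matrix.cons_val_zero, Matrix.cons_val_one,
      Matrix.head_cons, Matrix.empty_val', Matrix.cons_val_fin_one, Matrix.head_fin_const]
    filter_upwards [AEEqFun.coeFn_mul (star u) (aeSqrt (y * (π - y))), hsq,
      coeFn_star u] with ω e1 e2 e3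
    rw [e1]; simp [e2, e3]
  · simp only [pm, pmC, Fin.mk_zero, Fin.mk_one, Fin.isValue, Matrix.of_apply, Matrix.cons_val', Matrix.cons_val_one, Matrix.head_cons,
      Matrix.empty_val', Matrix.cons_val_fin_one, Matrix.head_fin_const]
    exact AEEqFun.coeFn_sub π y

lemma coeFn_matmul (P Q : Matrix (Fin 2) (Fin 2) (Ω →ₘ[ν] ℂ)) (a b : Fin 2) :
    ⇑((P * Q) a b) =ᶠ[MeasureTheory.ae ν]
      fun ω => (P a 0) ω * (Q 0 b) ω + (P a 1) ω * (Q 1 b) ω := by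
  have hE : (P * Q) a b = P a 0 * Q 0 b + P a 1 * Q 1 b := by
    rw [Matrix.mul_apply, Fin.sum_univ_two]
  rw [hE]
  filter_upwards [AEEqFun.coeFn_add (P a 0 * Q 0 b) (P a 1 * Q 1 b),
    AEEqFun.coeFn_mul (P a 0) (Q 0 b), AEEqFun.coeFn_mul (P a 1) (Q 1 b)] with ω e1 e2 e3
  rw [e1]; simp [e2, e3]

lemma keyC0 (r : ℝ) (u : ℂ) :
    pmC ((r:ℂ)*0) u 0 = 0 ∧ pmC ((1-(r:ℂ))*0) (-u) 0 = 0 := by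
  constructor <;>
  · ext a b
    fin_cases a <;> fin_cases b <;> simp [pmC]

lemma keyC1 (r : ℝ) (hr0 : 0 ≤ r) (hr1 : r ≤ 1) (u : ℂ) :
    pmC ((r:ℂ)*1) u 1 = !![(r:ℂ), u * (Real.sqrt (r*(1-r)) : ℂ);
      conj u * (Real.sqrt (r*(1-r)) : ℂ), 1 - (r:ℂ)] ∧
    pmC ((1-(r:ℂ))*1) (-u) 1 = !![1-(r:ℂ), -(u * (Real.sqrt (r*(1-r)) : ℂ));
      -(conj u * (Real.sqrt (r*(1-r)) : ℂ)), (r:ℂ)] := by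
  have hre : (((r:ℂ)*1) * (1 - (r:ℂ)*1)).re = r*(1-r) := by
    push_cast
    simp [Complex.mul_re, Complex.sub_re, Complex.ofReal_re, Complex.ofReal_im]
  have hre' : (((1-(r:ℂ))*1) * (1 - (1-(r:ℂ))*1)).re = r*(1-r) := by
    have : ((1-(r:ℂ))*1) * (1 - (1-(r:ℂ))*1) = ((1-r)*r : ℝ) := by push_cast; ring
    rw [this, Complex.ofReal_re]; ring
  constructor
  · rw [pmC, hre]
    ext a b; fin_cases a <;> fin_cases b <;> simp <;> ring
  · rw [pmC, hre']
    ext a b; fin_cases a <;> fin_cases b <;> simp <;> ring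

lemma keyC (r : ℝ) (hr0 : 0 ≤ r) (hr1 : r ≤ 1) (p u : ℂ)
    (hp : p = 0 ∨ p = 1) (hu : u * conj u = 1) :
    pmC ((r:ℂ)*p) u p * pmC ((r:ℂ)*p) u p = pmC ((r:ℂ)*p) u p ∧
    pmC ((1-(r:ℂ))*p) (-u) p * pmC ((1-(r:ℂ))*p) (-u) p = pmC ((1-(r:ℂ))*p) (-u) p ∧
    (pmC ((r:ℂ)*p) u p).conjTranspose = pmC ((r:ℂ)*p) u p ∧
    (pmC ((1-(r:ℂ))*p) (-u) p).conjTranspose = pmC ((1-(r:ℂ))*p) (-u) p ∧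
    pmC ((r:ℂ)*p) u p * pmC ((1-(r:ℂ))*p) (-u) p = 0 ∧
    pmC ((1-(r:ℂ))*p) (-u) p * pmC ((r:ℂ)*p) u p = 0 ∧
    pmC ((r:ℂ)*p) u p + pmC ((1-(r:ℂ))*p) (-u) p = !![p,0;0,p] ∧
    (!![p,0;0,p] : Matrix (Fin 2) (Fin 2) ℂ) * !![p,0;0,p] = !![p,0;0,p] ∧
    (!![p,0;0,p] : Matrix (Fin 2) (Fin 2) ℂ).conjTranspose = !![p,0;0,p] := by
  rcases hp with rfl | rfl
  · rw [(keyC0 r u).1, (keyC0 r u).2]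
    refine ⟨by simp, by simp, by simp, by simp, by simp, by simp, ?_, ?_, ?_⟩ <;>
    · ext a b; fin_cases a <;> fin_cases b <;> simp
  · rw [(keyC1 r hr0 hr1 u).1, (keyC1 r hr0 hr1 u).2]
    have hW2 : ((Real.sqrt (r*(1-r)) : ℝ) : ℂ)^2 = (r:ℂ) * (1-r) := by
      have h1 : Real.sqrt (r*(1-r)) * Real.sqrt (r*(1-r)) = r*(1-r) :=
        Real.mul_self_sqrt (mul_nonneg hr0 (by linarith))
      rw [pow_two]
      calc ((Real.sqrt (r*(1-r)) : ℝ) : ℂ) * ((Real.sqrt (r*(1-r)) : ℝ) : ℂ)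
          = ((Real.sqrt (r*(1-r)) * Real.sqrt (r*(1-r)) : ℝ) : ℂ) := by push_cast; ring
        _ = ((r*(1-r) : ℝ) : ℂ) := by rw [h1]
        _ = (r:ℂ) * (1-r) := by push_cast; ring
    generalize hWg : Real.sqrt (r*(1-r)) = W at hW2 ⊢
    refine ⟨?_, ?_, ?_, ?_, ?_, ?_, ?_, ?_, ?_⟩ <;>
      ext a b <;> fin_cases a <;> fin_cases b <;>
      simp [Matrix.mul_apply, Fin.sum_univ_two, Matrix.conjTranspose_apply] <;>
      (first
        | ring1
        | linear_combination ((r:ℂ)^2 - r)*hu - (u * (starRingEnd ℂ) u)*hW2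
        | linear_combination ((r:ℂ) - r^2)*hu + (u * (starRingEnd ℂ) u)*hW2
        | linear_combination (2*((r:ℂ)^2 - r))*hu - (2*(u * (starRingEnd ℂ) u))*hW2
        | linear_combination (2*((r:ℂ) - r^2))*hu + (2*(u * (starRingEnd ℂ) u))*hW2)

lemma coeFn_diag (π₁ π₂ : Ω →ₘ[ν] ℂ) (a b : Fin 2) :
    ⇑(diagN π₁ π₂ a b) =ᶠ[MeasureTheory.ae ν]
      fun ω => (!![π₁ ω, 0; 0, π₂ ω] : Matrix (Fin 2) (Fin 2) ℂ) a b := by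
  fin_cases a <;> fin_cases b <;>
    simp only [diagN, Fin.mk_zero, Fin.mk_one, Fin.isValue, Matrix.of_apply,
      Matrix.cons_val', Matrix.cons_val_one, Matrix.head_cons, Matrix.empty_val',
      Matrix.cons_val_fin_one, Matrix.cons_val_zero]
  exacts [Filter.EventuallyEq.rfl, AEEqFun.coeFn_zero, AEEqFun.coeFn_zero,
    Filter.EventuallyEq.rfl]

lemma mainMatrix (x v : Ω →ₘ[ν] ℂ)
    (hx : ∀ᵐ ω ∂ν, (x ω).im = 0 ∧ 0 ≤ (x ω).re ∧ (x ω).re ≤ 1)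
    (hv : v * star v = 1) {s : Set Ω} (hs : MeasurableSet s) :
    IsProjectionN (pm (x * ind ν hs) v (ind ν hs)) ∧
    IsProjectionN (pm ((1 - x) * ind ν hs) (-v) (ind ν hs)) ∧
    IsProjectionN (diagN (ind ν hs) (ind ν hs)) ∧
    pm (x * ind ν hs) v (ind ν hs) * pm ((1 - x) * ind ν hs) (-v) (ind ν hs) = 0 ∧
    pm ((1 - x) * ind ν hs) (-v) (ind ν hs) * pm (x * ind ν hs) v (ind ν hs) = 0 ∧
    pm (x * ind ν hs) v (ind ν hs) + pm ((1 - x) * ind ν hs) (-v) (ind ν hs)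
      = diagN (ind ν hs) (ind ν hs) := by
  set π : Ω →ₘ[ν] ℂ := ind ν hs with hπdef
  set P₁ : Matrix (Fin 2) (Fin 2) (Ω →ₘ[ν] ℂ) := pm (x * π) v π with hP₁def
  set P₂ : Matrix (Fin 2) (Fin 2) (Ω →ₘ[ν] ℂ) := pm ((1 - x) * π) (-v) π with hP₂def
  set Q : Matrix (Fin 2) (Fin 2) (Ω →ₘ[ν] ℂ) := diagN π π with hQdef
  have hvpt : ∀ᵐ ω ∂ν, v ω * conj (v ω) = 1 := by
    have h1 : ⇑(v * star v) =ᶠ[MeasureTheory.ae ν] ⇑(1 : Ω →ₘ[ν] ℂ) := by rw [hv]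
    filter_upwards [h1, AEEqFun.coeFn_mul v (star v), coeFn_star v,
      AEEqFun.coeFn_one (β := ℂ) (μ := ν)] with ω e1 e2 e3 e4
    rw [e2] at e1
    rw [Pi.mul_apply, e3] at e1
    rw [e1, e4]
    rfl
  have hπ01 : ∀ᵐ ω ∂ν, π ω = 0 ∨ π ω = 1 := by
    have hmk : ⇑π =ᶠ[MeasureTheory.ae ν] s.indicator fun _ => (1 : ℂ) :=
      AEEqFun.coeFn_mk _ _
    filter_upwards [hmk] with ω e
    rw [e]
    by_cases hω : ω ∈ s
    · right; simp [Set.indicator_of_mem hω]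
    · left; simp [Set.indicator_of_notMem hω]
  have G : ∀ᵐ ω ∂ν,
      ((x * π) ω = (((x ω).re : ℝ) : ℂ) * π ω) ∧
      (((1 - x) * π) ω = (1 - (((x ω).re : ℝ) : ℂ)) * π ω) ∧
      ((-v) ω = -(v ω)) ∧
      0 ≤ (x ω).re ∧ (x ω).re ≤ 1 ∧ (π ω = 0 ∨ π ω = 1) ∧
      (v ω * conj (v ω) = 1) := by
    filter_upwards [hx, hvpt, hπ01, AEEqFun.coeFn_mul x π, AEEqFun.coeFn_mul (1 - x) π,
      AEEqFun.coeFn_sub (1 : Ω →ₘ[ν] ℂ) x, AEEqFun.coeFn_one (β := ℂ) (μ := ν),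
      AEEqFun.coeFn_neg v] with ω ex ev eπ e1 e2 e3 e4 e5
    have hxr : x ω = (((x ω).re : ℝ) : ℂ) := by
      apply Complex.ext <;> simp [ex.1]
    refine ⟨?_, ?_, e5, ex.2.1, ex.2.2, eπ, ev⟩
    · rw [e1, Pi.mul_apply, ← hxr]
    · rw [e2, Pi.mul_apply, e3, Pi.sub_apply, e4, hxr]
      norm_num
  refine ⟨⟨?_, ?_⟩, ⟨?_, ?_⟩, ⟨?_, ?_⟩, ?_, ?_, ?_⟩
  · -- P₁ * P₁ = P₁
    ext a b
    filter_upwards [coeFn_matmul P₁ P₁ a b, coeFn_pm (x * π) v π a 0,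
      coeFn_pm (x * π) v π a 1, coeFn_pm (x * π) v π 0 b, coeFn_pm (x * π) v π 1 b,
      coeFn_pm (x * π) v π a b, G] with ω e1 ea0 ea1 e0b e1b eab hG
    obtain ⟨g1, g2, g3, g4, g5, g6, g7⟩ := hG
    rw [e1]
    show (P₁ a 0) ω * (P₁ 0 b) ω + (P₁ a 1) ω * (P₁ 1 b) ω = ⇑(P₁ a b) ω
    rw [ea0, ea1, e0b, e1b, eab, g1]
    have key := (keyC (x ω).re g4 g5 (π ω) (v ω) g6 g7).1
    have h2 := congrFun (congrFun key a) b
    rw [Matrix.mul_apply, Fin.sum_univ_two] at h2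
    exact h2
  · -- star P₁ = P₁
    ext a b
    rw [Matrix.star_apply]
    filter_upwards [coeFn_star (P₁ b a), coeFn_pm (x * π) v π b a,
      coeFn_pm (x * π) v π a b, G] with ω e1 e2 e3 hG
    obtain ⟨g1, g2, g3, g4, g5, g6, g7⟩ := hG
    rw [e1, e2, e3, g1]
    have key := (keyC (x ω).re g4 g5 (π ω) (v ω) g6 g7).2.2.1
    have h2 := congrFun (congrFun key a) b
    rw [Matrix.conjTranspose_apply] at h2
    exact h2
  · -- P₂ * P₂ = P₂
    ext a b
    filter_upwards [coeFn_matmul P₂ P₂ a b, coeFn_pm ((1 - x) * π) (-v) π a 0,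
      coeFn_pm ((1 - x) * π) (-v) π a 1, coeFn_pm ((1 - x) * π) (-v) π 0 b,
      coeFn_pm ((1 - x) * π) (-v) π 1 b, coeFn_pm ((1 - x) * π) (-v) π a b, G] with
      ω e1 ea0 ea1 e0b e1b eab hG
    obtain ⟨g1, g2, g3, g4, g5, g6, g7⟩ := hG
    rw [e1]
    show (P₂ a 0) ω * (P₂ 0 b) ω + (P₂ a 1) ω * (P₂ 1 b) ω = ⇑(P₂ a b) ω
    rw [ea0, ea1, e0b, e1b, eab, g2, g3]
    have key := (keyC (x ω).re g4 g5 (π ω) (v ω) g6 g7).2.1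
    have h2 := congrFun (congrFun key a) b
    rw [Matrix.mul_apply, Fin.sum_univ_two] at h2
    exact h2
  · -- star P₂ = P₂
    ext a b
    rw [Matrix.star_apply]
    filter_upwards [coeFn_star (P₂ b a), coeFn_pm ((1 - x) * π) (-v) π b a,
      coeFn_pm ((1 - x) * π) (-v) π a b, G] with ω e1 e2 e3 hG
    obtain ⟨g1, g2, g3, g4, g5, g6, g7⟩ := hG
    rw [e1, e2, e3, g2, g3]
    have key := (keyC (x ω).re g4 g5 (π ω) (v ω) g6 g7).2.2.2.1
    have h2 := congrFun (congrFun key a) b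
    rw [Matrix.conjTranspose_apply] at h2
    exact h2
  · -- Q * Q = Q
    ext a b
    filter_upwards [coeFn_matmul Q Q a b, coeFn_diag π π a 0, coeFn_diag π π a 1,
      coeFn_diag π π 0 b, coeFn_diag π π 1 b, coeFn_diag π π a b, G] with
      ω e1 ea0 ea1 e0b e1b eab hG
    obtain ⟨g1, g2, g3, g4, g5, g6, g7⟩ := hG
    rw [e1]
    show (Q a 0) ω * (Q 0 b) ω + (Q a 1) ω * (Q 1 b) ω = ⇑(Q a b) ω
    rw [ea0, ea1, e0b, e1b, eab]
    have key := (keyC (x ω).re g4 g5 (π ω) (v ω) g6 g7).2.2.2.2.2.2.2.1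
    have h2 := congrFun (congrFun key a) b
    rw [Matrix.mul_apply, Fin.sum_univ_two] at h2
    exact h2
  · -- star Q = Q
    ext a b
    rw [Matrix.star_apply]
    filter_upwards [coeFn_star (Q b a), coeFn_diag π π b a, coeFn_diag π π a b, G] with
      ω e1 e2 e3 hG
    obtain ⟨g1, g2, g3, g4, g5, g6, g7⟩ := hG
    rw [e1, e2, e3]
    have key := (keyC (x ω).re g4 g5 (π ω) (v ω) g6 g7).2.2.2.2.2.2.2.2
    have h2 := congrFun (congrFun key a) b
    rw [Matrix.conjTranspose_apply] at h2
    exact h2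
  · -- P₁ * P₂ = 0
    ext a b
    filter_upwards [coeFn_matmul P₁ P₂ a b, coeFn_pm (x * π) v π a 0,
      coeFn_pm (x * π) v π a 1, coeFn_pm ((1 - x) * π) (-v) π 0 b,
      coeFn_pm ((1 - x) * π) (-v) π 1 b, G, AEEqFun.coeFn_zero (β := ℂ) (μ := ν)] with
      ω e1 ea0 ea1 e0b e1b hG e0
    obtain ⟨g1, g2, g3, g4, g5, g6, g7⟩ := hG
    rw [e1]
    show (P₁ a 0) ω * (P₂ 0 b) ω + (P₁ a 1) ω * (P₂ 1 b) ω = ⇑((0 : Matrix (Fin 2) (Fin 2) (Ω →ₘ[ν] ℂ)) a b) ω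
    have hz : (0 : Matrix (Fin 2) (Fin 2) (Ω →ₘ[ν] ℂ)) a b = 0 := rfl
    rw [hz, e0, ea0, ea1, e0b, e1b, g1, g2, g3]
    have key := (keyC (x ω).re g4 g5 (π ω) (v ω) g6 g7).2.2.2.2.1
    have h2 := congrFun (congrFun key a) b
    rw [Matrix.mul_apply, Fin.sum_univ_two] at h2
    rw [h2]
    rfl
  · -- P₂ * P₁ = 0
    ext a b
    filter_upwards [coeFn_matmul P₂ P₁ a b, coeFn_pm ((1 - x) * π) (-v) π a 0,
      coeFn_pm ((1 - x) * π) (-v) π a 1, coeFn_pm (x * π) v π 0 b,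
      coeFn_pm (x * π) v π 1 b, G, AEEqFun.coeFn_zero (β := ℂ) (μ := ν)] with
      ω e1 ea0 ea1 e0b e1b hG e0
    obtain ⟨g1, g2, g3, g4, g5, g6, g7⟩ := hG
    rw [e1]
    show (P₂ a 0) ω * (P₁ 0 b) ω + (P₂ a 1) ω * (P₁ 1 b) ω = ⇑((0 : Matrix (Fin 2) (Fin 2) (Ω →ₘ[ν] ℂ)) a b) ω
    have hz : (0 : Matrix (Fin 2) (Fin 2) (Ω →ₘ[ν] ℂ)) a b = 0 := rfl
    rw [hz, e0, ea0, ea1, e0b, e1b, g1, g2, g3]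
    have key := (keyC (x ω).re g4 g5 (π ω) (v ω) g6 g7).2.2.2.2.2.1
    have h2 := congrFun (congrFun key a) b
    rw [Matrix.mul_apply, Fin.sum_univ_two] at h2
    rw [h2]
    rfl
  · -- P₁ + P₂ = Q
    ext a b
    have hadd : (P₁ + P₂) a b = P₁ a b + P₂ a b := rfl
    rw [hadd]
    filter_upwards [AEEqFun.coeFn_add (P₁ a b) (P₂ a b), coeFn_pm (x * π) v π a b,
      coeFn_pm ((1 - x) * π) (-v) π a b, coeFn_diag π π a b, G] with ω e1 e2 e3 e4 hG
    obtain ⟨g1, g2, g3, g4, g5, g6, g7⟩ := hG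
    rw [e1, Pi.add_apply, e2, e3, e4, g1, g2, g3]
    have key := (keyC (x ω).re g4 g5 (π ω) (v ω) g6 g7).2.2.2.2.2.2.1
    have h2 := congrFun (congrFun key a) b
    rw [Matrix.add_apply] at h2
    exact h2

theorem density_identity
    (ν : MeasureTheory.Measure Ω) [SigmaFinite ν]
    (m : Matrix (Fin 2) (Fin 2) (Ω →ₘ[ν] ℂ) → ℝ)
    (hm : IsMeasureOnProjectionsN ν m)
    (x v : Ω →ₘ[ν] ℂ)
    (hx : ∀ᵐ ω ∂ν, (x ω).im = 0 ∧ 0 ≤ (x ω).re ∧ (x ω).re ≤ 1)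
    (hrp : IsRangeProjectionM (1 : Ω →ₘ[ν] ℂ) (x * (1 - x)))
    (hv : v * star v = 1 ∧ star v * v = 1)
    (h₀ k₀ h k : Lp ℝ 2 ν)
    (hh₀ : ∀ᵐ ω ∂ν, 0 ≤ h₀ ω) (hk₀ : ∀ᵐ ω ∂ν, 0 ≤ k₀ ω)
    (hh : ∀ᵐ ω ∂ν, 0 ≤ h ω) (hk : ∀ᵐ ω ∂ν, 0 ≤ k ω)
    (hdiag : ∀ (s₁ s₂ : Set Ω) (hs₁ : MeasurableSet s₁) (hs₂ : MeasurableSet s₂),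
      m (diagN (ind ν hs₁) (ind ν hs₂)) =
        ∫ ω in s₁, (h₀ ω) ^ 2 ∂ν + ∫ ω in s₂, (k₀ ω) ^ 2 ∂ν)
    (hone : ∀ (s : Set Ω) (hs : MeasurableSet s),
      m (pm (x * ind ν hs) v (ind ν hs)) = ∫ ω in s, (h ω) ^ 2 ∂ν)
    (htwo : ∀ (s : Set Ω) (hs : MeasurableSet s),
      m (pm ((1 - x) * ind ν hs) (-v) (ind ν hs)) = ∫ ω in s, (k ω) ^ 2 ∂ν) :
    ∀ᵐ ω ∂ν, (h ω) ^ 2 + (k ω) ^ 2 = (h₀ ω) ^ 2 + (k₀ ω) ^ 2 := by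
  have hkey : ∀ (s : Set Ω) (hs : MeasurableSet s),
      (∫ ω in s, (h ω) ^ 2 ∂ν) + (∫ ω in s, (k ω) ^ 2 ∂ν)
        = (∫ ω in s, (h₀ ω) ^ 2 ∂ν) + (∫ ω in s, (k₀ ω) ^ 2 ∂ν) := by
    intro s hs
    obtain ⟨hP1, hP2, hQ, h12, h21, hsum⟩ := mainMatrix x v hx hv.1 hs
    set P₁ : Matrix (Fin 2) (Fin 2) (Ω →ₘ[ν] ℂ) := pm (x * ind ν hs) v (ind ν hs)
      with hP₁def
    set P₂ : Matrix (Fin 2) (Fin 2) (Ω →ₘ[ν] ℂ) :=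
      pm ((1 - x) * ind ν hs) (-v) (ind ν hs) with hP₂def
    set Q : Matrix (Fin 2) (Fin 2) (Ω →ₘ[ν] ℂ) := diagN (ind ν hs) (ind ν hs) with hQdef
    set p : ULift.{u} (Fin 2) → Matrix (Fin 2) (Fin 2) (Ω →ₘ[ν] ℂ) :=
      fun i => if i.down = 0 then P₁ else P₂ with hpdef
    have hp0 : p ⟨0⟩ = P₁ := by simp [hpdef]
    have hp1 : p ⟨1⟩ = P₂ := by simp [hpdef]
    have hsumuniv : ∑ i : ULift.{u} (Fin 2), p i = P₁ + P₂ := by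
      rw [← Equiv.sum_comp (Equiv.ulift (α := Fin 2)).symm p, Fin.sum_univ_two]
      show p ⟨0⟩ + p ⟨1⟩ = P₁ + P₂
      rw [hp0, hp1]
    have hws : HasWeakStarSum ν p Q := by
      intro a b g
      have hEv : (fun _ : Finset (ULift.{u} (Fin 2)) => ∫ ω, (Q a b) ω * g ω ∂ν)
          =ᶠ[atTop] (fun σ : Finset (ULift.{u} (Fin 2)) =>
            ∫ ω, ((∑ i ∈ σ, p i) a b) ω * g ω ∂ν) := by
        refine Filter.eventually_atTop.2 ⟨Finset.univ, fun σ hσ => ?_⟩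
        have hσu : σ = Finset.univ := Finset.eq_univ_of_forall fun i => hσ (Finset.mem_univ i)
        dsimp only
        rw [hσu]
        rw [show (∑ i ∈ Finset.univ, p i) = Q from hsumuniv.trans hsum]
      exact Filter.Tendsto.congr' hEv tendsto_const_nhds
    have hproj : ∀ i, IsProjectionN (p i) := by
      intro i
      rcases i with ⟨i⟩
      fin_cases i
      · show IsProjectionN (p ⟨0⟩)
        rw [hp0]; exact hP1
      · show IsProjectionN (p ⟨1⟩)
        rw [hp1]; exact hP2
    have horth : ∀ i j, i ≠ j → p i * p j = 0 := by
      intro i j hij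
      rcases i with ⟨i⟩
      rcases j with ⟨j⟩
      fin_cases i <;> fin_cases j
      · exact absurd rfl hij
      · show p ⟨0⟩ * p ⟨1⟩ = 0
        rw [hp0, hp1]; exact h12
      · show p ⟨1⟩ * p ⟨0⟩ = 0
        rw [hp1, hp0]; exact h21
      · exact absurd rfl hij
    have hHasSum := hm.2 p Q hproj hQ horth hws
    have hsum2 : m P₁ + m P₂ = m Q := by
      have h1 := hasSum_fintype (fun i => m (p i))
      have h2 := hHasSum.unique h1
      rw [h2, ← Equiv.sum_comp (Equiv.ulift (α := Fin 2)).symm (fun i => m (p i)),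
        Fin.sum_univ_two]
      show _ = m (p ⟨0⟩) + m (p ⟨1⟩)
      rw [hp0, hp1]
    rw [hP₁def] at hsum2
    rw [hone s hs, hP₂def, htwo s hs, hQdef, hdiag s s hs hs] at hsum2
    exact hsum2
  have ih : Integrable (fun ω => (h ω) ^ 2) ν := (Lp.memLp h).integrable_sq
  have ik : Integrable (fun ω => (k ω) ^ 2) ν := (Lp.memLp k).integrable_sq
  have ih₀ : Integrable (fun ω => (h₀ ω) ^ 2) ν := (Lp.memLp h₀).integrable_sq
  have ik₀ : Integrable (fun ω => (k₀ ω) ^ 2) ν := (Lp.memLp k₀).integrable_sq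
  have hae : (fun ω => (h ω) ^ 2 + (k ω) ^ 2)
      =ᶠ[MeasureTheory.ae ν] fun ω => (h₀ ω) ^ 2 + (k₀ ω) ^ 2 := by
    refine ae_eq_of_forall_setIntegral_eq_of_sigmaFinite
      (fun s _ _ => (ih.add ik).integrableOn)
      (fun s _ _ => (ih₀.add ik₀).integrableOn) ?_
    intro s hs _
    rw [integral_add ih.integrableOn ik.integrableOn,
      integral_add ih₀.integrableOn ik₀.integrableOn]
    exact hkey s hs
  filter_upwards [hae] with ω e
  exact e
end
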